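/- There exists r₀ ∈ ℕ such that the following holds for every integer r ≥ r₀. Let M be a random variable with 0 ≤ M ≤ 1 almost surely, and suppose that for every ρ of the form 1 + k/r with k ∈ {0, 1, …, r(r−1)} (i.e. ρ ∈ {1, 1+1/r, 1+2/r, …, r}) one has P[ M ≥ ρ/(256√r) ] ≤ 1/(2ρ·log r). Then 𝔼[M] ≤ 1/(128√r). -/

import Mathlib

/-! With `a = 1/(256√r)`, the grid points `ρ/(256√r) = a + k·(a/r)` climb past `1` after
`r(r-1) + 1` steps, so `M ≤ a + (a/r)·#{k : a + k·(a/r) ≤ M}` pointwise. Taking expectations, the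
tail bounds make the sum at most `a/(2 log r) · ∑_{k ≤ r(r-1)} 1/(r+k)`, and this harmonic sum over
`[r, r²]` is at most `1/r + ln r ≤ 2 log r`. Hence `𝔼[M] ≤ 2a`. -/

open MeasureTheory Finset

theorem le_add_sum_ite_grid {x a Δ : ℝ} (hΔ : 0 ≤ Δ) {N : ℕ} (hx : x < a + N * Δ) :
    x ≤ a + ∑ k ∈ range N, if a + k * Δ ≤ x then Δ else 0 := by
  induction N with
  | zero => simpa using hx.le
  | succ N ih =>
    rw [sum_range_succ]
    by_cases hN : x < a + N * Δ
    · have := ih hN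
      split_ifs <;> linarith
    · have hall : ∀ k ∈ range (N + 1), a + k * Δ ≤ x := fun k hk => by
        have : (k : ℝ) ≤ N := by exact_mod_cast Nat.lt_succ_iff.mp (mem_range.mp hk)
        nlinarith
      rw [← sum_range_succ, sum_congr rfl fun k hk => if_pos (hall k hk), sum_const, card_range,
        nsmul_eq_mul]
      push_cast at hx ⊢
      linarith

theorem integral_le_add_sum_grid_tail {Ω : Type*} [MeasurableSpace Ω] {μ : Measure Ω}
    [IsProbabilityMeasure μ] {X : Ω → ℝ} (hXm : Measurable X) (hX0 : 0 ≤ᵐ[μ] X)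
    {a Δ : ℝ} (hΔ : 0 ≤ Δ) {N : ℕ} (hXN : ∀ᵐ ω ∂μ, X ω < a + N * Δ) :
    ∫ ω, X ω ∂μ ≤ a + ∑ k ∈ range N, Δ * μ.real {ω | a + k * Δ ≤ X ω} := by
  have hmeas (k : ℕ) : MeasurableSet {ω | a + k * Δ ≤ X ω} :=
    measurableSet_le measurable_const hXm
  have hint (k : ℕ) : Integrable ({ω | a + k * Δ ≤ X ω}.indicator fun _ => Δ) μ :=
    (integrable_const Δ).indicator (hmeas k)
  calc ∫ ω, X ω ∂μ
      ≤ ∫ ω, a + ∑ k ∈ range N, {ω | a + k * Δ ≤ X ω}.indicator (fun _ => Δ) ω ∂μ := by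
        refine integral_mono_of_nonneg hX0
          ((integrable_const a).add (integrable_finsetSum _ fun k _ => hint k)) ?_
        filter_upwards [hXN] with ω hω
        simpa only [Set.indicator_apply, Set.mem_ofPred_eq] using le_add_sum_ite_grid hΔ hω
    _ = a + ∑ k ∈ range N, Δ * μ.real {ω | a + k * Δ ≤ X ω} := by
        rw [integral_add (integrable_const a) (integrable_finsetSum _ fun k _ => hint k),
          integral_const, integral_finsetSum _ fun k _ => hint k, probReal_univ, one_smul]
        congr 1
        refine sum_congr rfl fun k _ => ?_
        rw [integral_indicator_const _ (hmeas k), smul_eq_mul, mul_comm]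

theorem sum_range_one_div_add_le_log {R : ℝ} (hR : 0 < R) (n : ℕ) :
    ∑ k ∈ range (n + 1), 1 / (R + k) ≤ 1 / R + (Real.log (R + n) - Real.log R) := by
  induction n with
  | zero => simp
  | succ n ih =>
    have hpos : 0 < R + n := by positivity
    have hstep : 1 / (R + (n + 1)) ≤ Real.log (R + (n + 1)) - Real.log (R + n) := by
      have := Real.one_sub_inv_le_log_of_pos (show 0 < (R + (n + 1)) / (R + n) by positivity)
      rw [Real.log_div (by positivity) hpos.ne', inv_div] at this
      convert this using 1
      field_simp
      ring
    rw [sum_range_succ]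
    push_cast
    linarith

theorem sum_range_grid_tail_bound_le (r : ℕ) (hr : 2 ≤ r) {a : ℝ} (ha : 0 ≤ a) :
    ∑ k ∈ range (r * (r - 1) + 1),
      a / r * (1 / (2 * (1 + (k : ℝ) / r) * Real.logb 2 r)) ≤ a := by
  have hR : (2 : ℝ) ≤ r := by exact_mod_cast hr
  have hL : 1 ≤ Real.logb 2 r := by
    rw [Real.le_logb_iff_rpow_le one_lt_two (by positivity)]; simpa using hR
  have hlog : Real.log r ≤ Real.logb 2 r := by
    rw [Real.logb, le_div_iff₀ (Real.log_pos one_lt_two)]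
    nlinarith [Real.log_two_lt_d9, Real.log_nonneg (by linarith : (1 : ℝ) ≤ r)]
  have hK : (r : ℝ) + (r * (r - 1) : ℕ) = r * r := by
    push_cast [Nat.cast_sub (by omega : 1 ≤ r)]; ring
  calc ∑ k ∈ range (r * (r - 1) + 1), a / r * (1 / (2 * (1 + (k : ℝ) / r) * Real.logb 2 r))
      = a / (2 * Real.logb 2 r) * ∑ k ∈ range (r * (r - 1) + 1), 1 / ((r : ℝ) + k) := by
        rw [mul_sum]
        refine sum_congr rfl fun k _ => ?_
        field_simp
    _ ≤ a / (2 * Real.logb 2 r) * (1 / r + Real.log r) := by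
        gcongr
        refine (sum_range_one_div_add_le_log (by positivity) _).trans (le_of_eq ?_)
        rw [hK, Real.log_mul (by positivity) (by positivity)]
        ring
    _ ≤ a / (2 * Real.logb 2 r) * (2 * Real.logb 2 r) := by
        gcongr
        have : 1 / (r : ℝ) ≤ 1 := by rw [div_le_one (by positivity)]; linarith
        linarith
    _ = a := by field_simp

noncomputable def gridPoint (r k : ℕ) : ℝ := (1 + (k : ℝ) / r) / (256 * Real.sqrt r)

theorem gridPoint_eq_add_mul {r : ℕ} (hr : 0 < r) (k : ℕ) :
    gridPoint r k = 1 / (256 * Real.sqrt r) + k * (1 / (256 * Real.sqrt r) / r) := by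
  have : 0 < Real.sqrt r := Real.sqrt_pos.mpr (by exact_mod_cast hr)
  unfold gridPoint
  field_simp

theorem one_lt_gridPoint_end {r : ℕ} (hr : 256 ^ 2 ≤ r) : 1 < gridPoint r (r * (r - 1) + 1) := by
  have hR : (256 : ℝ) ^ 2 ≤ r := by exact_mod_cast hr
  have hK : ((r * (r - 1) + 1 : ℕ) : ℝ) = r * r - r + 1 := by
    push_cast [Nat.cast_sub (by omega : 1 ≤ r)]
    ring
  have hr_lt : (r : ℝ) < 1 + (r * r - r + 1) / r := by
    rw [← sub_lt_iff_lt_add', lt_div_iff₀ (by positivity)]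
    linarith
  have hsr : 256 * Real.sqrt r ≤ r := by
    nlinarith [Real.mul_self_sqrt (Nat.cast_nonneg r : (0 : ℝ) ≤ r)]
  rw [gridPoint, hK, one_lt_div (by positivity)]
  linarith

theorem expectation_from_grid_tail_bounds :
    ∃ r₀ : ℕ, ∀ r : ℕ, r₀ ≤ r →
      ∀ {Ω : Type} (_ : MeasurableSpace Ω) (μ : Measure Ω), IsProbabilityMeasure μ →
      ∀ M : Ω → ℝ, Measurable M →
        (∀ᵐ ω ∂μ, M ω ∈ Set.Icc (0 : ℝ) 1) →
        (∀ k : ℕ, k ≤ r * (r - 1) →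
          μ {ω | (1 + (k : ℝ) / r) / (256 * Real.sqrt r) ≤ M ω}
            ≤ ENNReal.ofReal (1 / (2 * (1 + (k : ℝ) / r) * Real.logb 2 r))) →
        ∫ ω, M ω ∂μ ≤ 1 / (128 * Real.sqrt r) := by
  refine ⟨256 ^ 2, fun r hr Ω _ μ _ M hM hM01 htail => ?_⟩
  set a : ℝ := 1 / (256 * Real.sqrt r)
  have hgrid := gridPoint_eq_add_mul (by omega : 0 < r)
  have hL : 0 < Real.logb 2 r := Real.logb_pos one_lt_two (by exact_mod_cast (by omega : 1 < r))
  have htop : ∀ᵐ ω ∂μ, M ω < a + ((r * (r - 1) + 1 : ℕ) : ℝ) * (a / r) :=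
    hM01.mono fun _ hω => hgrid _ ▸ hω.2.trans_lt (one_lt_gridPoint_end hr)
  calc ∫ ω, M ω ∂μ
      ≤ a + ∑ k ∈ range (r * (r - 1) + 1), a / r * μ.real {ω | gridPoint r k ≤ M ω} := by
        simpa only [hgrid] using
          integral_le_add_sum_grid_tail hM (hM01.mono fun _ h => h.1) (by positivity) htop
    _ ≤ a + ∑ k ∈ range (r * (r - 1) + 1),
          a / r * (1 / (2 * (1 + (k : ℝ) / r) * Real.logb 2 r)) := by
        gcongr with k hk
        exact ENNReal.toReal_le_of_le_ofReal (by positivity)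
          (htail k (Nat.lt_succ_iff.mp (mem_range.mp hk)))
    _ ≤ a + a := by grw [sum_range_grid_tail_bound_le r (by omega) (by positivity)]
    _ = 1 / (128 * Real.sqrt r) := by ring
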